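/- Let G : ℝ → ℝ be measurable and let α > 0. Assume that the function t ↦ |G(t)|/(e^{αt} − e^{−αt}) is integrable on (0, ∞). Then the odd-index series ∑'_{k=1}^∞ ∫₀^∞ e^{−α(2k−1)t} G(t) dt converges and equals ∫₀^∞ G(t)/(e^{αt} − e^{−αt}) dt. -/

import Mathlib

open MeasureTheory Real Set

/-! Expanding `1 / (e^{αt} - e^{-αt}) = ∑_{k ≥ 0} e^{-(2k+1)αt}` as a geometric series in `e^{-2αt}`,
the claim is termwise integration of `∑_k e^{-(2k+1)αt} G(t)`. The series of absolute values sums to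
`|G(t)| / (e^{αt} - e^{-αt})`, which is integrable by assumption, so dominated convergence applies. -/

theorem MeasureTheory.hasSum_integral_of_hasSum_norm {α E ι : Type*} [MeasurableSpace α]
    {μ : Measure α} [NormedAddCommGroup E] [NormedSpace ℝ E] [Countable ι]
    {F : ι → α → E} {f : α → E} {g : α → ℝ} (hF : ∀ n, AEStronglyMeasurable (F n) μ)
    (h_norm : ∀ᵐ a ∂μ, HasSum (fun n => ‖F n a‖) (g a)) (hg : Integrable g μ)
    (h_lim : ∀ᵐ a ∂μ, HasSum (fun n => F n a) (f a)) :
    HasSum (fun n => ∫ a, F n a ∂μ) (∫ a, f a ∂μ) :=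
  hasSum_integral_of_dominated_convergence (fun n a => ‖F n a‖) hF
    (fun _ => ae_of_all _ fun _ => le_rfl) (h_norm.mono fun _ h => h.summable)
    (hg.congr (h_norm.mono fun _ h => h.tsum_eq.symm)) h_lim

theorem hasSum_exp_neg_odd_mul {x : ℝ} (hx : 0 < x) :
    HasSum (fun k : ℕ => exp (-((2 * k + 1) * x))) (exp x - exp (-x))⁻¹ := by
  have hr : exp (-(2 * x)) < 1 := exp_lt_one_iff.mpr (by linarith)
  have hterm : ∀ k : ℕ, exp (-((2 * k + 1) * x)) = exp (-x) * exp (-(2 * x)) ^ k := by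
    intro k
    rw [← exp_nat_mul, ← exp_add]
    ring_nf
  have hsum : exp (-x) * (1 - exp (-(2 * x)))⁻¹ = (exp x - exp (-x))⁻¹ := by
    rw [show exp x - exp (-x) = exp x * (1 - exp (-(2 * x))) by
      rw [mul_sub, mul_one, ← exp_add]; ring_nf, mul_inv, exp_neg]
  simpa only [hterm, hsum] using
    (hasSum_geometric_of_lt_one (exp_pos _).le hr).mul_left (exp (-x))

theorem hasSum_exp_neg_odd_mul_mul {α t : ℝ} (hα : 0 < α) (ht : 0 < t) (y : ℝ) :
    HasSum (fun k : ℕ => exp (-(α * (2 * k + 1) * t)) * y)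
      (y / (exp (α * t) - exp (-(α * t)))) := by
  have hodd : ∀ k : ℕ, α * (2 * k + 1) * t = (2 * k + 1) * (α * t) := fun k => by ring
  simpa only [hodd, div_eq_inv_mul] using (hasSum_exp_neg_odd_mul (mul_pos hα ht)).mul_right y

/-- Hyperbolic inverted sine series: `∑_{k≥1} ∫₀^∞ e^{-α(2k-1)t} G(t) dt`
converges to `∫₀^∞ G(t)/(e^{αt} - e^{-αt}) dt`. -/
theorem odd_index_series_eq_integral (G : ℝ → ℝ) (hG : Measurable G) (α : ℝ) (hα : 0 < α)
    (hint : IntegrableOn (fun t => |G t| / (Real.exp (α * t) - Real.exp (-(α * t)))) (Ioi 0)) :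
    HasSum (fun k : ℕ => ∫ t in Ioi 0, Real.exp (-(α * (2 * k + 1) * t)) * G t)
      (∫ t in Ioi 0, G t / (Real.exp (α * t) - Real.exp (-(α * t)))) := by
  refine hasSum_integral_of_hasSum_norm (fun k => ?_) ?_ hint ?_
  · exact ((measurable_const.mul measurable_id).neg.exp.mul hG).aestronglyMeasurable
  · filter_upwards [ae_restrict_mem measurableSet_Ioi] with t ht
    simpa only [norm_mul, norm_eq_abs, abs_of_pos (exp_pos _)] using
      hasSum_exp_neg_odd_mul_mul hα ht |G t|
  · filter_upwards [ae_restrict_mem measurableSet_Ioi] with t ht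
    exact hasSum_exp_neg_odd_mul_mul hα ht (G t)
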